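/- Let 0 < s ≤ 1, let M ≥ 8s, and let n be a positive integer. If z ∈ ℂ satisfies |z| ≤ 1 + s/√n, r is a real number with 1/2 ≤ r ≤ 1 + s/√n, and |z − r| ≥ M/√n, then |z − r| ≤ 4·|z·r − 1|. -/

import Mathlib

/-!
For real `r` one has `‖z r - 1‖² = ‖z - r‖² + (1 - r²)(1 - ‖z‖²)`. The correction term can only be
negative when `‖z‖` and `r` lie on opposite sides of `1`; since both are at most `1 + δ` with
`δ = s / √n`, it is then at least `-6 δ ‖z - r‖ ≥ -(3/4) ‖z - r‖²`, so `‖z - r‖ ≤ 2 ‖z r - 1‖`.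
-/

open Complex

theorem Complex.norm_mul_ofReal_sub_one_sq (z : ℂ) (r : ℝ) :
    ‖z * r - 1‖ ^ 2 = ‖z - r‖ ^ 2 + (1 - r ^ 2) * (1 - ‖z‖ ^ 2) := by
  simp only [Complex.sq_norm, normSq_apply, mul_re, mul_im, sub_re, sub_im, ofReal_re, ofReal_im,
    one_re, one_im]
  ring

lemma neg_le_one_sub_sq_mul_one_sub_sq_of_le_one_le {a b δ d : ℝ} (hb0 : 0 ≤ b) (hb : b ≤ 1)
    (ha : 1 ≤ a) (haδ : a ≤ 1 + δ) (hδ : δ ≤ 1) (hab : a - b ≤ d) (hδd : 8 * δ ≤ d) :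
    -(3 / 4 * d ^ 2) ≤ (1 - a ^ 2) * (1 - b ^ 2) := by
  have ha_sq : a ^ 2 - 1 ≤ 3 * δ := by nlinarith
  have hb_sq : 1 - b ^ 2 ≤ 2 * d := by nlinarith
  have hprod : (a ^ 2 - 1) * (1 - b ^ 2) ≤ 3 * δ * (2 * d) :=
    mul_le_mul ha_sq hb_sq (by nlinarith) (by linarith)
  nlinarith

lemma neg_le_one_sub_sq_mul_one_sub_sq {a b δ d : ℝ} (ha : 0 ≤ a) (hb : 0 ≤ b)
    (haδ : a ≤ 1 + δ) (hbδ : b ≤ 1 + δ) (hδ : δ ≤ 1) (hab : |a - b| ≤ d) (hδd : 8 * δ ≤ d) :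
    -(3 / 4 * d ^ 2) ≤ (1 - a ^ 2) * (1 - b ^ 2) := by
  wlog hba : b ≤ a generalizing a b
  · rw [mul_comm (1 - a ^ 2)]
    exact this hb ha hbδ haδ (abs_sub_comm a b ▸ hab) (le_of_not_ge hba)
  have hd_sq : -(3 / 4 * d ^ 2) ≤ 0 := by nlinarith
  rcases le_total a 1 with ha1 | ha1
  · exact hd_sq.trans (mul_nonneg (by nlinarith) (by nlinarith))
  rcases le_total b 1 with hb1 | hb1
  · exact neg_le_one_sub_sq_mul_one_sub_sq_of_le_one_le hb hb1 ha1 haδ hδ (le_of_abs_le hab) hδd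
  · exact hd_sq.trans (mul_nonneg_of_nonpos_of_nonpos (by nlinarith) (by nlinarith))

theorem Complex.norm_sub_ofReal_le_two_mul_norm_mul_ofReal_sub_one {z : ℂ} {r δ : ℝ}
    (hr : 0 ≤ r) (hz : ‖z‖ ≤ 1 + δ) (hrδ : r ≤ 1 + δ) (hδ : δ ≤ 1) (hδd : 8 * δ ≤ ‖z - r‖) :
    ‖z - r‖ ≤ 2 * ‖z * r - 1‖ := by
  have hnorm : |‖z‖ - r| ≤ ‖z - r‖ := by
    simpa [norm_real, abs_of_nonneg hr] using abs_norm_sub_norm_le z (r : ℂ)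
  have hprod := neg_le_one_sub_sq_mul_one_sub_sq hr (norm_nonneg z) hrδ hz hδ
    (abs_sub_comm r ‖z‖ ▸ hnorm) hδd
  have hsq : ‖z - r‖ ^ 2 ≤ (2 * ‖z * r - 1‖) ^ 2 := by
    rw [mul_pow, norm_mul_ofReal_sub_one_sq]
    linarith
  exact (sq_le_sq₀ (norm_nonneg _) (by positivity)).1 hsq

theorem dist_le_four_mul_dist_prod_one
    (s M : ℝ) (hs1 : s ≤ 1) (hM : 8 * s ≤ M) (n : ℕ) (hn : 1 ≤ n)
    (z : ℂ) (r : ℝ)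
    (hz : ‖z‖ ≤ 1 + s / Real.sqrt n)
    (hr1 : 1 / 2 ≤ r) (hr2 : r ≤ 1 + s / Real.sqrt n)
    (hd : M / Real.sqrt n ≤ ‖z - (r : ℂ)‖) :
    ‖z - (r : ℂ)‖ ≤ 4 * ‖z * (r : ℂ) - 1‖ := by
  have hsqrt : 1 ≤ Real.sqrt n := Real.one_le_sqrt.2 (by exact_mod_cast hn)
  have hδ : s / Real.sqrt n ≤ 1 := div_le_one_of_le₀ (hs1.trans hsqrt) (Real.sqrt_nonneg n)
  have hδd : 8 * (s / Real.sqrt n) ≤ ‖z - r‖ := by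
    rw [← mul_div_assoc]
    exact (div_le_div_of_nonneg_right hM (Real.sqrt_nonneg n)).trans hd
  have := norm_sub_ofReal_le_two_mul_norm_mul_ofReal_sub_one (by linarith) hz hr2 hδ hδd
  linarith [norm_nonneg (z * r - 1)]
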